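/- arXiv:0812.4784 — 5 statements merged into one kernel-verified Lean document; each statement's English description precedes it below -/
import Mathlib

section
/- For every natural number n, the following identity holds (Strehl's identity for the Franel numbers): ∑_{k=0}^{n} C(n,k)^3 = ∑_{k=0}^{n} C(n,k)^2 · C(2k,n). -/
/-!
Expand `C(2k, n) = ∑_{a+b=n} C(k,a) C(k,b)` by Vandermonde and swap the sums. For fixed
`a + b = n`, trinomial revision `C(n,k) C(k,a) = C(n,a) C(b,n-k)` turns
`∑_k C(n,k)² C(k,a) C(k,b)` into `C(n,a)² ∑_j C(a,j) C(b,j)`, and the last sum is `C(n,a)` by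
Vandermonde again, so each antidiagonal term contributes `C(n,a)³`.
-/

open Finset

namespace Nat

theorem choose_mul_choose_of_add_eq {n k a b : ℕ} (hab : a + b = n) (hk : k ≤ n) :
    n.choose k * k.choose a = n.choose a * b.choose (n - k) := by
  rcases le_or_gt a k with hak | hka
  · rw [choose_mul hak, show n - a = b by omega,
      choose_symm_of_eq_add (show b = k - a + (n - k) by omega)]
  · rw [choose_eq_zero_of_lt hka, choose_eq_zero_of_lt (show b < n - k by omega), mul_zero,
      mul_zero]

theorem sum_range_choose_mul_choose (a b : ℕ) :
    ∑ j ∈ range (a + b + 1), a.choose j * b.choose j = (a + b).choose a := by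
  have hvandermonde : (a + b).choose b = ∑ j ∈ range (b + 1), a.choose j * b.choose j := by
    rw [add_choose_eq, Nat.sum_antidiagonal_eq_sum_range_succ (fun i j => a.choose i * b.choose j)]
    refine sum_congr rfl fun j hj => ?_
    rw [choose_symm (mem_range_succ_iff.1 hj)]
  rw [choose_symm_add, hvandermonde]
  refine (sum_subset (range_subset_range.2 (by omega)) fun j _ hj => ?_).symm
  rw [choose_eq_zero_of_lt (n := b) (by simpa using hj), mul_zero]

theorem sum_range_choose_sq_mul_choose_mul_choose {n a b : ℕ} (hab : a + b = n) :
    ∑ k ∈ range (n + 1), n.choose k ^ 2 * (k.choose a * k.choose b) = n.choose a ^ 3 := by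
  have hterm : ∀ k ∈ range (n + 1), n.choose k ^ 2 * (k.choose a * k.choose b)
      = n.choose a ^ 2 * (a.choose (n - k) * b.choose (n - k)) := by
    intro k hk
    have hk : k ≤ n := mem_range_succ_iff.1 hk
    have hsymm : n.choose b = n.choose a := choose_symm_of_eq_add (by omega)
    calc n.choose k ^ 2 * (k.choose a * k.choose b)
        = (n.choose k * k.choose a) * (n.choose k * k.choose b) := by ring
      _ = (n.choose a * b.choose (n - k)) * (n.choose b * a.choose (n - k)) := by
        rw [choose_mul_choose_of_add_eq hab hk,
          choose_mul_choose_of_add_eq (b := a) (by omega) hk]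
      _ = n.choose a ^ 2 * (a.choose (n - k) * b.choose (n - k)) := by rw [hsymm]; ring
  have hreflect : ∑ k ∈ range (n + 1), a.choose (n - k) * b.choose (n - k)
      = ∑ j ∈ range (n + 1), a.choose j * b.choose j := by
    rw [← sum_range_reflect]
    refine sum_congr rfl fun j hj => ?_
    rw [add_tsub_cancel_right, Nat.sub_sub_self (mem_range_succ_iff.1 hj)]
  rw [sum_congr rfl hterm, ← mul_sum, hreflect, ← hab, sum_range_choose_mul_choose]
  ring

end Nat

theorem strehl_franel_identity (n : ℕ) :
    ∑ k ∈ range (n + 1), (n.choose k) ^ 3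
      = ∑ k ∈ range (n + 1), (n.choose k) ^ 2 * (2 * k).choose n := by
  calc ∑ k ∈ range (n + 1), n.choose k ^ 3
      = ∑ ab ∈ antidiagonal n, n.choose ab.1 ^ 3 :=
        (Nat.sum_antidiagonal_eq_sum_range_succ (fun a _ => n.choose a ^ 3) n).symm
    _ = ∑ ab ∈ antidiagonal n, ∑ k ∈ range (n + 1),
          n.choose k ^ 2 * (k.choose ab.1 * k.choose ab.2) :=
        sum_congr rfl fun ab hab =>
          (Nat.sum_range_choose_sq_mul_choose_mul_choose (mem_antidiagonal.1 hab)).symm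
    _ = ∑ k ∈ range (n + 1), ∑ ab ∈ antidiagonal n,
          n.choose k ^ 2 * (k.choose ab.1 * k.choose ab.2) := sum_comm
    _ = ∑ k ∈ range (n + 1), n.choose k ^ 2 * (2 * k).choose n := by
        simp_rw [← mul_sum, two_mul, Nat.add_choose_eq]
end

section
/- For every natural number n, the following identity holds (Strehl's identity for the Apéry numbers): ∑_{k=0}^{n} C(n,k) · C(n+k,k) · (∑_{j=0}^{k} C(k,j)^3) = ∑_{k=0}^{n} C(n,k)^2 · C(n+k,k)^2. -/
/-!
The Franel number `∑ⱼ C(k,j)³` equals `∑ⱼ C(k,j)² C(2j,k)`. Substituting this on the left and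
exchanging the two sums, the trinomial revision `C(a,b) C(b,c) = C(a,c) C(a-c,b-c)` pulls
`C(n,j) C(2j,j)` out of the sum over `k`, and what remains is Surányi's identity
`∑ᵢ C(m,i) C(q,i) C(p+i,m+q) = C(p,m) C(p,q)` with `m = n - j`, `q = j`, `p = n + j`.
Both auxiliary identities come from Vandermonde's convolution combined with trinomial revision.
-/

open Finset

theorem Finset.sum_range_triangle_comm {M : Type*} [AddCommMonoid M] (N : ℕ)
    (f : ℕ → ℕ → M) :
    ∑ k ∈ range N, ∑ j ∈ range (k + 1), f k j
      = ∑ j ∈ range N, ∑ i ∈ range (N - j), f (j + i) j := by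
  rw [← sum_range_diag_flip N fun j i => f (j + i) j]
  refine sum_congr rfl fun k _ => sum_congr rfl fun j hj => ?_
  rw [Nat.add_sub_cancel' (Nat.le_of_lt_succ (mem_range.1 hj))]

namespace Nat

theorem add_choose_eq_sum_range (a b c : ℕ) :
    (a + b).choose c = ∑ x ∈ range (c + 1), a.choose x * b.choose (c - x) := by
  rw [add_choose_eq, Finset.Nat.sum_antidiagonal_eq_sum_range_succ_mk]

theorem add_choose_eq_sum_range_of_le {a c : ℕ} (b : ℕ) (h : a ≤ c) :
    (a + b).choose c = ∑ x ∈ range (a + 1), a.choose x * b.choose (c - x) := by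
  rw [add_choose_eq_sum_range]
  refine (sum_subset (range_subset_range.2 (succ_le_succ h)) fun x _ hx => ?_).symm
  rw [choose_eq_zero_of_lt (by simpa using hx), zero_mul]

theorem add_choose_add_eq_sum_range (a b s : ℕ) :
    (a + b).choose (a + s) = ∑ i ∈ range (a + 1), a.choose i * b.choose (s + i) := by
  rw [add_choose_eq_sum_range_of_le b (le_add_right a s), ← sum_range_reflect]
  refine sum_congr rfl fun i hi => ?_
  have hia : i ≤ a := le_of_lt_succ (mem_range.1 hi)
  rw [add_tsub_cancel_right, choose_symm hia, show a + s - (a - i) = s + i by omega]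

theorem choose_mul_choose_sub_comm (n a b : ℕ) :
    n.choose a * (n - a).choose b = n.choose b * (n - b).choose a := by
  have ha := choose_mul (n := n) (le_add_right a b)
  have hb := choose_mul (n := n) (le_add_left b a)
  rw [add_tsub_cancel_left] at ha
  rw [add_tsub_cancel_right] at hb
  rw [← ha, ← hb, choose_symm_add]

theorem sum_range_choose_mul_choose_mul_add_choose (m q p : ℕ) :
    ∑ i ∈ range (m + 1), m.choose i * q.choose i * (p + i).choose (m + q)
      = p.choose m * p.choose q := by
  have expand : ∀ i ∈ range (m + 1), m.choose i * q.choose i * (p + i).choose (m + q)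
      = ∑ x ∈ range (i + 1), m.choose i * q.choose i * (i.choose x * p.choose (m + q - x)) := by
    intro i hi
    rw [add_comm p, add_choose_eq_sum_range_of_le p (by simp at hi; omega), mul_sum]
  have collapse : ∀ x ∈ range (m + 1),
      ∑ u ∈ range (m + 1 - x),
          m.choose (x + u) * q.choose (x + u) * ((x + u).choose x * p.choose (m + q - x))
        = p.choose q * (q.choose x * (p - q).choose (m - x)) := by
    intro x hx
    have hxm : x ≤ m := le_of_lt_succ (mem_range.1 hx)
    calc ∑ u ∈ range (m + 1 - x),
          m.choose (x + u) * q.choose (x + u) * ((x + u).choose x * p.choose (m + q - x))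
        = q.choose x * p.choose (m + q - x) *
            ∑ u ∈ range (m - x + 1), (q - x).choose u * m.choose (m - x - u) := by
          rw [mul_sum, show m + 1 - x = m - x + 1 by omega]
          refine sum_congr rfl fun u hu => ?_
          have hum : x + u ≤ m := by simp at hu; omega
          have hq : q.choose (x + u) * (x + u).choose x = q.choose x * (q - x).choose u := by
            simpa using choose_mul (n := q) (le_add_right x u)
          rw [choose_symm_of_eq_add (show m = x + u + (m - x - u) by omega)]
          calc _ = m.choose (m - x - u) * (q.choose (x + u) * (x + u).choose x)
                * p.choose (m + q - x) := by ring
            _ = _ := by rw [hq]; ring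
      _ = q.choose x * p.choose (m + q - x) * (q - x + m).choose (m - x) := by
          rw [add_choose_eq_sum_range]
      _ = p.choose q * (q.choose x * (p - q).choose (m - x)) := by
          rcases le_or_gt x q with hxq | hqx
          · rw [choose_symm_of_eq_add (show q - x + m = m - x + q by omega),
              show q - x + m = m + q - x by omega, mul_assoc, choose_mul (by omega),
              show m + q - x - q = m - x by omega]
            ring
          · rw [choose_eq_zero_of_lt hqx]; ring
  rw [sum_congr rfl expand, sum_range_triangle_comm, sum_congr rfl collapse, ← mul_sum,
    ← add_choose_eq_sum_range]
  rcases le_or_gt q p with hqp | hpq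
  · rw [add_tsub_cancel_of_le hqp, mul_comm]
  · rw [choose_eq_zero_of_lt hpq, mul_zero, zero_mul]

theorem sum_range_choose_pow_three (k : ℕ) :
    ∑ j ∈ range (k + 1), k.choose j ^ 3
      = ∑ j ∈ range (k + 1), k.choose j ^ 2 * (2 * j).choose k := by
  have expand : ∀ j ∈ range (k + 1), k.choose j ^ 3
      = ∑ s ∈ range (j + 1), k.choose j ^ 2 * (j.choose s * (k - j).choose s) := by
    intro j hj
    have hjk : j ≤ k := le_of_lt_succ (mem_range.1 hj)
    have vandermonde := add_choose_add_eq_sum_range j (k - j) 0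
    simp only [add_zero, zero_add, add_tsub_cancel_of_le hjk] at vandermonde
    rw [← mul_sum, ← vandermonde]
    ring
  have collapse : ∀ s ∈ range (k + 1),
      ∑ u ∈ range (k + 1 - s),
          k.choose (s + u) ^ 2 * ((s + u).choose s * (k - (s + u)).choose s)
        = k.choose s ^ 2 * (2 * (k - s)).choose k := by
    intro s hs
    have hsk : s ≤ k := le_of_lt_succ (mem_range.1 hs)
    calc ∑ u ∈ range (k + 1 - s),
          k.choose (s + u) ^ 2 * ((s + u).choose s * (k - (s + u)).choose s)
        = ∑ u ∈ range (k - s + 1),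
            k.choose s ^ 2 * ((k - s).choose u * (k - s).choose (s + u)) := by
          rw [show k + 1 - s = k - s + 1 by omega]
          refine sum_congr rfl fun u _ => ?_
          rw [sq, sq, mul_mul_mul_comm, choose_mul (le_add_right s u), add_tsub_cancel_left,
            choose_mul_choose_sub_comm k (s + u) s]
          ring
      _ = k.choose s ^ 2 * (2 * (k - s)).choose k := by
          rw [← mul_sum, ← add_choose_add_eq_sum_range, ← two_mul, tsub_add_cancel_of_le hsk]
  rw [sum_congr rfl expand, sum_range_triangle_comm, sum_congr rfl collapse, ← sum_range_reflect]
  refine sum_congr rfl fun s hs => ?_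
  have hsk : s ≤ k := le_of_lt_succ (mem_range.1 hs)
  rw [add_tsub_cancel_right, choose_symm hsk, Nat.sub_sub_self hsk]

theorem sum_range_choose_mul_add_choose_mul_choose_sq_mul_choose {n j : ℕ} (hj : j ≤ n) :
    ∑ k ∈ range (n + 1), n.choose k * (n + k).choose k * (k.choose j ^ 2 * (2 * j).choose k)
      = n.choose j ^ 2 * (n + j).choose j ^ 2 := by
  obtain ⟨m, rfl⟩ := exists_add_of_le hj
  have two_mul_sub : 2 * j - j = j := by omega
  have revise : ∀ i ∈ range (m + 1),
      (j + m).choose (j + i) * (j + m + (j + i)).choose (j + i)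
          * ((j + i).choose j ^ 2 * (2 * j).choose (j + i))
        = (j + m).choose j * (2 * j).choose j
          * (m.choose i * j.choose i * (j + m + j + i).choose (m + j)) := by
    intro i _
    have h₁ : (j + m).choose (j + i) * (j + i).choose j = (j + m).choose j * m.choose i := by
      simpa using choose_mul (n := j + m) (le_add_right j i)
    have h₂ : (2 * j).choose (j + i) * (j + i).choose j = (2 * j).choose j * j.choose i := by
      simpa [two_mul_sub] using choose_mul (n := 2 * j) (le_add_right j i)
    rw [show j + m + (j + i) = j + i + (m + j) by ring,
      show j + m + j + i = j + i + (m + j) by ring, choose_symm_add]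
    calc _ = ((j + m).choose (j + i) * (j + i).choose j)
            * ((2 * j).choose (j + i) * (j + i).choose j) * (j + i + (m + j)).choose (m + j) := by
          ring
      _ = _ := by rw [h₁, h₂]; ring
  have central :
      (j + m + j).choose m * (2 * j).choose j = (j + m).choose j * (j + m + j).choose j := by
    rw [choose_symm_of_eq_add (show j + m + j = m + 2 * j by ring), choose_mul (by omega),
      two_mul_sub, show j + m + j - j = j + m by omega, mul_comm]
  rw [show j + m + 1 = j + (m + 1) by ring, sum_range_add,
    sum_eq_zero fun k hk => by rw [choose_eq_zero_of_lt (mem_range.1 hk)]; ring, zero_add,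
    sum_congr rfl revise, ← mul_sum, sum_range_choose_mul_choose_mul_add_choose]
  calc (j + m).choose j * (2 * j).choose j * ((j + m + j).choose m * (j + m + j).choose j)
      = (j + m).choose j * ((j + m + j).choose m * (2 * j).choose j) * (j + m + j).choose j := by
        ring
    _ = _ := by rw [central]; ring

end Nat

theorem strehl_apery_identity (n : ℕ) :
    ∑ k ∈ range (n + 1), n.choose k * (n + k).choose k * ∑ j ∈ range (k + 1), (k.choose j) ^ 3
      = ∑ k ∈ range (n + 1), (n.choose k) ^ 2 * ((n + k).choose k) ^ 2 := by
  have extend : ∀ k ∈ range (n + 1),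
      n.choose k * (n + k).choose k * ∑ j ∈ range (k + 1), k.choose j ^ 3
        = ∑ j ∈ range (n + 1),
            n.choose k * (n + k).choose k * (k.choose j ^ 2 * (2 * j).choose k) := by
    intro k hk
    rw [Nat.sum_range_choose_pow_three, mul_sum]
    refine sum_subset (range_subset_range.2 (mem_range.1 hk)) fun j _ hj => ?_
    rw [Nat.choose_eq_zero_of_lt (n := k) (by simpa using hj)]
    ring
  rw [sum_congr rfl extend, sum_comm]
  exact sum_congr rfl fun j hj => Nat.sum_range_choose_mul_add_choose_mul_choose_sq_mul_choose
    (Nat.le_of_lt_succ (mem_range.1 hj))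
end

section
/- For all natural numbers n and k with k ≤ n, the number of abelian squares (w, w') of size n over a 3-letter alphabet with no position at which both w and w' have the letter 1, and in which the letter 1 occurs exactly n−k times in w, equals C(n,k)^2 · C(2k,n). Formally: the number of pairs of words w, w' : Fin n → Fin 3 such that every letter c ∈ Fin 3 occurs equally often in w and in w', there is no position i with w(i) = 0 and w'(i) = 0, and the number of positions i with w(i) = 0 is n−k, equals C(n,k)^2 · C(2k,n). -/
/-!
A word over `{0, 1, 2}` is the same as a pair of disjoint sets, its zeros `A` and its ones `S`.
The pairs to be counted therefore correspond to quadruples `(A, B, S, T)` with `A`, `B` disjoint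
sets of size `n - k`, `S ⊆ Aᶜ`, `T ⊆ Bᶜ` and `#S = #T` (equal numbers of twos then come for free).
There are `C(n, k)` choices of `A`, `C(k, n - k)` of `B ⊆ Aᶜ`, and by Vandermonde `C(2k, k)` of
`(S, T)`; finally `C(k, n - k) C(2k, k) = C(n, k) C(2k, n)`.
-/

open Finset

theorem Nat.sum_range_choose_mul_choose_s13 (a b : ℕ) :
    ∑ j ∈ range (a + 1), a.choose j * b.choose j = (a + b).choose a := by
  rw [Nat.add_choose_eq, Nat.sum_antidiagonal_eq_sum_range_succ_mk, ← sum_range_reflect]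
  refine sum_congr rfl fun j hj => ?_
  rw [mem_range] at hj
  rw [show a + 1 - 1 - j = a - j by omega, Nat.choose_symm (by omega)]

theorem Nat.choose_sub_mul_choose_two_mul {n k : ℕ} (hk : k ≤ n) :
    k.choose (n - k) * (2 * k).choose k = n.choose k * (2 * k).choose n := by
  rcases le_or_gt n (2 * k) with h | h
  · have := Nat.choose_mul (n := 2 * k) (k := n) (s := k) hk
    rw [show 2 * k - k = k by omega] at this
    rw [mul_comm, ← this, mul_comm]
  · rw [Nat.choose_eq_zero_of_lt (show k < n - k by omega), Nat.choose_eq_zero_of_lt h,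
      zero_mul, mul_zero]

theorem Finset.card_filter_card_eq_powerset_product {β : Type*} (s t : Finset β) :
    #{p ∈ s.powerset ×ˢ t.powerset | #p.1 = #p.2} = (#s + #t).choose #s := by
  have fiber (j : ℕ) : {p ∈ {p ∈ s.powerset ×ˢ t.powerset | #p.1 = #p.2} | #p.1 = j} =
      s.powersetCard j ×ˢ t.powersetCard j := by
    ext ⟨S, T⟩
    simp only [mem_filter, mem_product, mem_powerset, mem_powersetCard]
    grind
  rw [card_eq_sum_card_fiberwise (f := fun p => #p.1) (t := range (#s + 1)) fun p hp =>
    mem_range_succ_iff.mpr <|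
      card_le_card (mem_powerset.mp (mem_product.mp (mem_filter.mp hp).1).1)]
  simp only [fiber, card_product, card_powersetCard]
  exact Nat.sum_range_choose_mul_choose_s13 _ _

theorem forall_card_filter_eq_of_forall_ne {α β : Type*} [Fintype α] [Fintype β] [DecidableEq β]
    {w w' : α → β} (c₀ : β) (h : ∀ c ≠ c₀, #{i | w i = c} = #{i | w' i = c}) :
    ∀ c, #{i | w i = c} = #{i | w' i = c} := by
  intro c
  rcases ne_or_eq c c₀ with hc | rfl
  · exact h c hc
  have total (v : α → β) :
      #{i | v i = c} + ∑ b ∈ univ.erase c, #{i | v i = b} = Fintype.card α := by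
    rw [add_sum_erase univ (fun b => #{i | v i = b}) (mem_univ c), ← card_univ,
      card_eq_sum_card_fiberwise (f := v) (t := univ) fun _ _ => mem_univ _]
  have total_w := total w
  rw [sum_congr rfl fun b hb => h b (ne_of_mem_erase hb), ← total w'] at total_w
  omega

section Words

variable {α : Type*} [DecidableEq α]

def wordOfZerosOnes (A S : Finset α) (i : α) : Fin 3 :=
  if i ∈ A then 0 else if i ∈ S then 1 else 2

theorem wordOfZerosOnes_eq_zero_iff {A S : Finset α} {i : α} :
    wordOfZerosOnes A S i = 0 ↔ i ∈ A := by
  unfold wordOfZerosOnes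
  split_ifs <;> simp_all

variable [Fintype α]

theorem filter_wordOfZerosOnes_eq_zero (A S : Finset α) :
    ({i | wordOfZerosOnes A S i = 0} : Finset α) = A := by
  ext i
  rw [mem_filter, wordOfZerosOnes_eq_zero_iff, and_iff_right (mem_univ i)]

theorem filter_wordOfZerosOnes_eq_one {A S : Finset α} (h : Disjoint A S) :
    ({i | wordOfZerosOnes A S i = 1} : Finset α) = S := by
  ext i
  have not_mem_both := @disjoint_left.mp h i
  rw [mem_filter]
  simp only [mem_univ, true_and, wordOfZerosOnes]
  split_ifs <;> simp_all

theorem wordOfZerosOnes_filter (w : α → Fin 3) :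
    wordOfZerosOnes {i | w i = 0} {i | w i = 1} = w := by
  funext i
  simp only [wordOfZerosOnes, mem_filter, mem_univ, true_and]
  split_ifs <;> omega

/-- Quadruples `⟨A, B, S, T⟩` standing for the zeros `A`, `B` and the ones `S`, `T` of two words. -/
def zerosOnesQuadruples (m : ℕ) : Finset (Σ _ : Finset α, Σ _ : Finset α, Finset α × Finset α) :=
  (powersetCard m univ).sigma fun A => (Aᶜ.powersetCard m).sigma fun B =>
    {p ∈ Aᶜ.powerset ×ˢ Bᶜ.powerset | #p.1 = #p.2}

theorem mem_zerosOnesQuadruples {m : ℕ} {A B S T : Finset α} :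
    ⟨A, B, S, T⟩ ∈ zerosOnesQuadruples m ↔
      #A = m ∧ (Disjoint B A ∧ #B = m) ∧ (Disjoint S A ∧ Disjoint T B) ∧ #S = #T := by
  simp only [zerosOnesQuadruples, mem_sigma, mem_powersetCard, subset_univ, true_and,
    mem_filter, mem_product, mem_powerset, subset_compl_iff_disjoint_right]

theorem card_zerosOnesQuadruples (m : ℕ) :
    #(zerosOnesQuadruples (α := α) m) =
      (Fintype.card α).choose m * (Fintype.card α - m).choose m *
        (2 * (Fintype.card α - m)).choose (Fintype.card α - m) := by
  have card_compl_of_mem {A s : Finset α} (hA : A ∈ s.powersetCard m) :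
      #Aᶜ = Fintype.card α - m := by
    rw [card_compl, (mem_powersetCard.mp hA).2]
  have count_given_zeros (A : Finset α) (hA : A ∈ powersetCard m univ) :
      #((Aᶜ.powersetCard m).sigma fun B => {p ∈ Aᶜ.powerset ×ˢ Bᶜ.powerset | #p.1 = #p.2}) =
        (Fintype.card α - m).choose m * (2 * (Fintype.card α - m)).choose (Fintype.card α - m) := by
    rw [card_sigma, sum_congr rfl fun B hB => by
      rw [card_filter_card_eq_powerset_product, card_compl_of_mem hA, card_compl_of_mem hB,
        ← two_mul]]
    rw [sum_const, card_powersetCard, card_compl_of_mem hA, smul_eq_mul]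
  rw [zerosOnesQuadruples, card_sigma, sum_congr rfl count_given_zeros, sum_const,
    card_powersetCard, card_univ, smul_eq_mul, mul_assoc]

theorem card_abelianSquares_eq_card_zerosOnesQuadruples (m : ℕ) :
    #{p : (α → Fin 3) × (α → Fin 3) |
        (∀ c, #{i | p.1 i = c} = #{i | p.2 i = c}) ∧
        (¬ ∃ i, p.1 i = 0 ∧ p.2 i = 0) ∧ #{i | p.1 i = 0} = m} =
      #(zerosOnesQuadruples (α := α) m) := by
  refine card_bij'
    (fun p _ => ⟨univ.filter (p.1 · = 0), univ.filter (p.2 · = 0),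
      univ.filter (p.1 · = 1), univ.filter (p.2 · = 1)⟩)
    (fun q _ => (wordOfZerosOnes q.1 q.2.2.1, wordOfZerosOnes q.2.1 q.2.2.2)) ?_ ?_ ?_ ?_
  · intro p hp
    obtain ⟨hcount, hno, hm⟩ := (mem_filter.mp hp).2
    refine mem_zerosOnesQuadruples.mpr ⟨hm, ⟨?_, (hcount 0).symm.trans hm⟩, ⟨?_, ?_⟩, hcount 1⟩
    · exact disjoint_filter.mpr fun i _ h0' h0 => hno ⟨i, h0, h0'⟩
    all_goals exact disjoint_filter.mpr fun i _ h1 h0 => absurd (h1.symm.trans h0) (by decide)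
  · rintro ⟨A, B, S, T⟩ hq
    obtain ⟨hA, ⟨hBA, hB⟩, ⟨hSA, hTB⟩, hST⟩ := mem_zerosOnesQuadruples.mp hq
    refine mem_filter.mpr ⟨mem_univ _, forall_card_filter_eq_of_forall_ne 2 fun c hc => ?_, ?_, ?_⟩
    · obtain rfl | rfl : c = 0 ∨ c = 1 := by omega
      · rw [filter_wordOfZerosOnes_eq_zero, filter_wordOfZerosOnes_eq_zero, hA, hB]
      · rw [filter_wordOfZerosOnes_eq_one hSA.symm, filter_wordOfZerosOnes_eq_one hTB.symm, hST]
    · simp only [wordOfZerosOnes_eq_zero_iff]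
      exact fun ⟨i, hiA, hiB⟩ => disjoint_left.mp hBA hiB hiA
    · rw [filter_wordOfZerosOnes_eq_zero, hA]
  · rintro ⟨w, w'⟩ -
    simp only [wordOfZerosOnes_filter]
  · rintro ⟨A, B, S, T⟩ hq
    obtain ⟨-, -, ⟨hSA, hTB⟩, -⟩ := mem_zerosOnesQuadruples.mp hq
    rw [filter_wordOfZerosOnes_eq_zero, filter_wordOfZerosOnes_eq_zero,
      filter_wordOfZerosOnes_eq_one hSA.symm, filter_wordOfZerosOnes_eq_one hTB.symm]

end Words

theorem abelian_squares_no_common_one_count_by_ones (n k : ℕ) (hk : k ≤ n) :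
    ((Finset.univ : Finset ((Fin n → Fin 3) × (Fin n → Fin 3))).filter (fun p =>
        (∀ c : Fin 3,
          (Finset.univ.filter (fun i => p.1 i = c)).card
            = (Finset.univ.filter (fun i => p.2 i = c)).card) ∧
        (¬ ∃ i : Fin n, p.1 i = 0 ∧ p.2 i = 0) ∧
        (Finset.univ.filter (fun i => p.1 i = 0)).card = n - k)).card
      = (n.choose k) ^ 2 * (2 * k).choose n := by
  -- `convert` reconciles the instance `Nat.decidableExistsFin` with the generic one.
  calc _ = #(zerosOnesQuadruples (α := Fin n) (n - k)) := by
        convert card_abelianSquares_eq_card_zerosOnesQuadruples (n - k)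
    _ = _ := by
      rw [card_zerosOnesQuadruples, Fintype.card_fin, Nat.sub_sub_self hk, Nat.choose_symm hk,
        mul_assoc, Nat.choose_sub_mul_choose_two_mul hk, ← mul_assoc, sq]
end

section
/- For all natural numbers n and a, the number of 2×n matrices with entries in a 3-letter alphabet having the same number of occurrences of the letter 1 in each row and exactly a more occurrences of the letter 3 in the top row than in the bottom row equals ∑_{k=0}^{n} C(n,k)^2 · C(2k, k−a), where C(2k, k−a) is interpreted as 0 when k < a. Formally: the number of pairs of words w, w' : Fin n → Fin 3 such that #{i : w(i) = 0} = #{i : w'(i) = 0} and #{i : w(i) = 2} = #{i : w'(i) = 2} + a equals ∑_{k=0}^{n} C(n,k)^2 · C(2k, k−a). -/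
/-!
A pair of rows is classified by the common number `j` of letters `0` and the number `t` of
letters `2` in the top row: there are `C(n,j) C(n-j,t)` top rows and `C(n,j) C(n-j,t-a)` bottom
rows. Summing over `t` is Vandermonde's identity and gives `C(n,j)^2 C(2(n-j), n-j+a)`;
substituting `k = n - j` and using `C(2k, k-a) = C(2k, k+a)` yields the formula.
-/

open Finset

section Words

variable {ι : Type*} [Fintype ι] [DecidableEq ι]

def ternaryWord (S T : Finset ι) (i : ι) : Fin 3 :=
  if i ∈ S then 0 else if i ∈ T then 2 else 1

lemma filter_ternaryWord_eq_zero (S T : Finset ι) :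
    ({i | ternaryWord S T i = 0} : Finset ι) = S := by
  ext i
  by_cases hS : i ∈ S <;> by_cases hT : i ∈ T <;> simp [ternaryWord, hS, hT]

lemma filter_ternaryWord_eq_two {S T : Finset ι} (h : Disjoint S T) :
    ({i | ternaryWord S T i = 2} : Finset ι) = T := by
  ext i
  simp only [mem_filter, mem_univ, true_and]
  unfold ternaryWord
  split_ifs with hS hT
  · simp [disjoint_left.1 h hS]
  · simp [hT]
  · simp [hT]

lemma ternaryWord_filter (w : ι → Fin 3) :
    ternaryWord {i | w i = 0} {i | w i = 2} = w := by
  funext i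
  simp only [ternaryWord, mem_filter, mem_univ, true_and]
  split_ifs <;> omega

lemma card_words_count_zero_count_two (j t : ℕ) :
    #{w : ι → Fin 3 | #{i | w i = 0} = j ∧ #{i | w i = 2} = t}
      = (Fintype.card ι).choose j * (Fintype.card ι - j).choose t := by
  calc _ = #((powersetCard j univ).sigma fun S : Finset ι => powersetCard t Sᶜ) := by
        refine card_nbij' (fun w => ⟨univ.filter (w · = 0), univ.filter (w · = 2)⟩)
          (fun p => ternaryWord p.1 p.2) ?_ ?_ (fun w _ => ternaryWord_filter w) ?_ <;>
          simp only [Set.MapsTo, Set.LeftInvOn, coe_filter, coe_sigma, Set.mem_sigma_iff,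
            Set.mem_ofPred_eq, mem_coe, mem_univ, true_and, mem_powersetCard, subset_univ,
            subset_compl_iff_disjoint_left, Sigma.forall]
        · rintro w ⟨rfl, rfl⟩
          exact ⟨rfl, disjoint_filter.2 fun i _ h => by omega, rfl⟩
        · rintro S T ⟨rfl, hST, rfl⟩
          rw [filter_ternaryWord_eq_zero, filter_ternaryWord_eq_two hST]
          exact ⟨rfl, rfl⟩
        · rintro S T ⟨-, hST, -⟩
          rw [filter_ternaryWord_eq_zero, filter_ternaryWord_eq_two hST]
    _ = _ := by
      rw [card_sigma, sum_const_nat fun S hS => by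
        rw [card_powersetCard, card_compl, (mem_powersetCard.1 hS).2], card_powersetCard, card_univ]

lemma card_words_count_zero_count_two_add (j t a : ℕ) :
    #{w : ι → Fin 3 | j = #{i | w i = 0} ∧ t = #{i | w i = 2} + a}
      = (Fintype.card ι).choose j *
          if a ≤ t then (Fintype.card ι - j).choose (t - a) else 0 := by
  split_ifs with hat
  · rw [← card_words_count_zero_count_two]
    congr 1
    exact filter_congr fun w _ => by omega
  · rw [mul_zero, card_eq_zero, filter_eq_empty_iff]
    intro w _
    omega

lemma sum_count_zero_count_two {M : Type*} [AddCommMonoid M] (F : ℕ → ℕ → M) :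
    ∑ w : ι → Fin 3, F #{i | w i = 0} #{i | w i = 2}
      = ∑ j ∈ range (Fintype.card ι + 1), ∑ t ∈ range (Fintype.card ι + 1),
          ((Fintype.card ι).choose j * (Fintype.card ι - j).choose t) • F j t := by
  set n := Fintype.card ι
  rw [← sum_product', ← sum_fiberwise_of_maps_to (s := univ)
    (t := range (n + 1) ×ˢ range (n + 1)) (g := fun w => (#{i | w i = 0}, #{i | w i = 2}))]
  · refine sum_congr rfl fun ⟨j, t⟩ _ => ?_
    simp only [Prod.mk.injEq]
    rw [← card_words_count_zero_count_two, ← sum_const]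
    exact sum_congr rfl fun w hw => by rw [(mem_filter.1 hw).2.1, (mem_filter.1 hw).2.2]
  · intro w _
    simp only [mem_product, mem_range, Nat.lt_succ_iff]
    exact ⟨card_le_univ _, card_le_univ _⟩

end Words

lemma card_filter_prod_eq_sum {α β : Type*} [Fintype α] [Fintype β] (P : α → β → Prop)
    [∀ x y, Decidable (P x y)] :
    #{p : α × β | P p.1 p.2} = ∑ x, #{y | P x y} := by
  simp only [card_filter, Fintype.sum_prod_type]

lemma choose_mul_ite_choose_sub (m a t : ℕ) :
    m.choose t * (if a ≤ t then m.choose (t - a) else 0) = m.choose t * m.choose (m + a - t) := by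
  rcases le_or_gt t m with htm | htm
  · split_ifs with hat
    · rw [Nat.choose_symm_of_eq_add (by omega : m = (t - a) + (m + a - t))]
    · rw [Nat.choose_eq_zero_of_lt (by omega : m < m + a - t)]
  · rw [Nat.choose_eq_zero_of_lt htm, zero_mul, zero_mul]

lemma sum_range_choose_mul_choose_add_sub {m N : ℕ} (a : ℕ) (h : m < N) :
    ∑ t ∈ range N, m.choose t * m.choose (m + a - t) = (2 * m).choose (m + a) := by
  have vanish : ∀ M, m < M → ∑ t ∈ range M, m.choose t * m.choose (m + a - t)
      = ∑ t ∈ range (m + 1), m.choose t * m.choose (m + a - t) := fun M hM =>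
    (sum_subset (range_subset_range.2 hM) fun t ht hnot => by
      simp only [mem_range, not_lt] at ht hnot
      rw [Nat.choose_eq_zero_of_lt (by omega), zero_mul]).symm
  rw [vanish N h, two_mul, Nat.add_choose_eq, Nat.sum_antidiagonal_eq_sum_range_succ
    (fun i j => m.choose i * m.choose j), ← vanish (m + a).succ (by omega)]

lemma ite_choose_sub_eq_choose_add (k a : ℕ) :
    (if a ≤ k then (2 * k).choose (k - a) else 0) = (2 * k).choose (k + a) := by
  split_ifs with h
  · exact Nat.choose_symm_of_eq_add (by omega)
  · exact (Nat.choose_eq_zero_of_lt (by omega)).symm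

theorem generalized_abelian_matrices_count (n a : ℕ) :
    ((Finset.univ : Finset ((Fin n → Fin 3) × (Fin n → Fin 3))).filter (fun p =>
        (Finset.univ.filter (fun i => p.1 i = 0)).card
          = (Finset.univ.filter (fun i => p.2 i = 0)).card ∧
        (Finset.univ.filter (fun i => p.1 i = 2)).card
          = (Finset.univ.filter (fun i => p.2 i = 2)).card + a)).card
      = ∑ k ∈ range (n + 1),
          (n.choose k) ^ 2 * (if a ≤ k then (2 * k).choose (k - a) else 0) := by
  calc _ = ∑ w : Fin n → Fin 3, #{w' : Fin n → Fin 3 |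
          #{i | w i = 0} = #{i | w' i = 0} ∧ #{i | w i = 2} = #{i | w' i = 2} + a} :=
        card_filter_prod_eq_sum fun w w' => _
    _ = ∑ j ∈ range (n + 1), ∑ t ∈ range (n + 1), (n.choose j * (n - j).choose t) •
          (n.choose j * if a ≤ t then (n - j).choose (t - a) else 0) := by
        simp only [card_words_count_zero_count_two_add, Fintype.card_fin]
        exact (sum_count_zero_count_two fun j t =>
          n.choose j * if a ≤ t then (n - j).choose (t - a) else 0).trans
          (by rw [Fintype.card_fin])
    _ = ∑ j ∈ range (n + 1), n.choose j ^ 2 * (2 * (n - j)).choose (n - j + a) := by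
        refine sum_congr rfl fun j hj => ?_
        rw [← sum_range_choose_mul_choose_add_sub a (by omega : n - j < n + 1), mul_sum]
        refine sum_congr rfl fun t _ => ?_
        rw [← choose_mul_ite_choose_sub, smul_eq_mul]
        ring
    _ = ∑ k ∈ range (n + 1), n.choose k ^ 2 * (2 * k).choose (k + a) := by
        rw [← sum_range_reflect]
        refine sum_congr rfl fun j hj => ?_
        rw [mem_range] at hj
        rw [show n + 1 - 1 - j = n - j by omega, Nat.choose_symm (by omega),
          Nat.sub_sub_self (by omega)]
    _ = _ := by simp only [ite_choose_sub_eq_choose_add]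
end

section
/- For all natural numbers n and k with k ≤ n, the following weighted count of abelian squares holds: ∑ over all abelian squares (w, w') of size n over a 3-letter alphabet such that the top row w has exactly k entries different from the letter 1, of the binomial coefficient C(n + j(w,w'), j(w,w')), equals C(n,k)^2 · C(n+k,k)^2, where j(w,w') denotes n minus the number of positions i at which both w(i) and w'(i) equal the letter 1. Formally: ∑_{(w,w')} C(n + j(w,w'), j(w,w')) = C(n,k)^2 · C(n+k,k)^2, the sum being over pairs w, w' : Fin n → Fin 3 such that every letter c ∈ Fin 3 occurs equally often in w and in w', and #{i : w(i) ≠ 0} = k, with j(w,w') = n − #{i : w(i) = 0 and w'(i) = 0}. -/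
/-!
Let `a = n - k` be the number of letters `0` in `w` (and in `w'`). Once the zero sets `A`, `B` of
`w`, `w'` are fixed, the other positions carry two words over `{1, 2}` of length `k` with equally
many `1`s, giving `C(2k, k)` pairs, and the weight depends only on `m = #(A ∩ B)`, for which there
are `C(n, a) C(a, m) C(k, a - m)` choices of `(A, B)`. With `t = a - m` the theorem reduces to
`∑ₜ C(a, t) C(k, t) C(a + 2k + t, a + k) = C(a + 2k, k) C(a + 2k, a)`, which follows from
Vandermonde's identity after expanding `C(a + 2k + t, a + k) = ∑ₛ C(t, s) C(a + 2k, a + k - s)` and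
summing over `t` first.
-/

open Finset

namespace Nat

lemma add_choose_eq_sum_range_s18 (m n r : ℕ) :
    (m + n).choose r = ∑ i ∈ range (r + 1), m.choose i * n.choose (r - i) := by
  rw [add_choose_eq, Finset.Nat.sum_antidiagonal_eq_sum_range_succ_mk]

lemma sum_range_choose_mul_of_le {a N : ℕ} (f : ℕ → ℕ) (h : a ≤ N) :
    ∑ t ∈ range (N + 1), a.choose t * f t = ∑ t ∈ range (a + 1), a.choose t * f t := by
  refine (sum_subset (range_subset_range.2 (by omega)) fun t _ hta => ?_).symm
  rw [choose_eq_zero_of_lt (by simpa using hta), zero_mul]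

lemma choose_mul_choose_eq_choose_mul_choose_sub {n i : ℕ} (j : ℕ) (hi : i ≤ n) :
    n.choose i * i.choose j = n.choose j * (n - j).choose (n - i) := by
  rcases le_or_gt j i with hji | hij
  · rw [choose_mul hji, ← choose_symm (by omega : i - j ≤ n - j)]
    congr 2; omega
  · rw [choose_eq_zero_of_lt hij, mul_zero]
    rcases le_or_gt j n with hjn | hnj
    · rw [choose_eq_zero_of_lt (by omega : n - j < n - i), mul_zero]
    · rw [choose_eq_zero_of_lt hnj, zero_mul]

lemma sum_choose_mul_choose_add (m n r : ℕ) :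
    ∑ s ∈ range (m + 1), m.choose s * n.choose (r + s) = (m + n).choose (m + r) := by
  rw [add_choose_eq_sum_range_s18, sum_range_choose_mul_of_le _ (by omega : m ≤ m + r),
    ← sum_range_reflect]
  refine sum_congr rfl fun s hs => ?_
  have hs : s ≤ m := by simpa [Nat.lt_succ_iff] using hs
  rw [add_tsub_cancel_right, choose_symm_of_eq_add (by omega : m = m - s + s)]
  congr 2; omega

lemma sum_choose_mul_choose_mul_choose (a k j : ℕ) :
    ∑ t ∈ range (a + 1), a.choose t * (k.choose t * t.choose j)
      = k.choose j * (a + k - j).choose k := by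
  calc ∑ t ∈ range (a + 1), a.choose t * (k.choose t * t.choose j)
      = ∑ t ∈ range (k + 1), k.choose t * (a.choose t * t.choose j) := by
        rw [← sum_range_choose_mul_of_le _ (by omega : a ≤ a + k),
          ← sum_range_choose_mul_of_le _ (by omega : k ≤ a + k)]
        exact sum_congr rfl fun t _ => by ring
    _ = k.choose j * ∑ t ∈ range (k + 1), a.choose t * (k - j).choose (k - t) := by
        rw [mul_sum]
        refine sum_congr rfl fun t ht => ?_
        rw [mul_left_comm, choose_mul_choose_eq_choose_mul_choose_sub j
          (by simpa [Nat.lt_succ_iff] using ht)]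
        ring
    _ = k.choose j * (a + k - j).choose k := by
        rw [← add_choose_eq_sum_range_s18]
        rcases le_or_gt j k with hjk | hkj
        · rw [Nat.add_sub_assoc hjk]
        · simp [choose_eq_zero_of_lt hkj]

lemma sum_choose_mul_choose_mul_add_choose (a k : ℕ) :
    ∑ t ∈ range (a + 1), a.choose t * k.choose t * (a + 2 * k + t).choose (a + k)
      = (a + 2 * k).choose k * (a + 2 * k).choose a := by
  calc ∑ t ∈ range (a + 1), a.choose t * k.choose t * (a + 2 * k + t).choose (a + k)
      = ∑ s ∈ range (a + k + 1), (a + 2 * k).choose (a + k - s) *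
          ∑ t ∈ range (a + 1), a.choose t * (k.choose t * t.choose s) := by
        simp_rw [mul_sum]
        rw [sum_comm]
        refine sum_congr rfl fun t _ => ?_
        rw [add_comm (a + 2 * k), add_choose_eq_sum_range_s18, mul_sum]
        exact sum_congr rfl fun s _ => by ring
    _ = ∑ s ∈ range (a + k + 1),
          (a + 2 * k).choose k * (k.choose s * (a + k).choose (k + s)) := by
        refine sum_congr rfl fun s hs => ?_
        have hs : s ≤ a + k := by simpa [Nat.lt_succ_iff] using hs
        rw [sum_choose_mul_choose_mul_choose, mul_left_comm,
          choose_mul_choose_eq_choose_mul_choose_sub k (by omega : a + k - s ≤ a + 2 * k)]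
        rw [show a + 2 * k - k = a + k by omega, show a + 2 * k - (a + k - s) = k + s by omega]
        ring
    _ = (a + 2 * k).choose k * (a + 2 * k).choose a := by
        rw [← mul_sum, sum_range_choose_mul_of_le _ (by omega : k ≤ a + k),
          sum_choose_mul_choose_add, show k + (a + k) = a + 2 * k by omega,
          choose_symm_of_eq_add (by omega : a + 2 * k = k + k + a)]

lemma centralBinom_mul_choose_mul_sum_eq (a k : ℕ) :
    k.centralBinom * ((k + a).choose a * ∑ m ∈ range (a + 1),
        a.choose m * k.choose (a - m) * ((k + a) + ((k + a) - m)).choose ((k + a) - m))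
      = ((k + a).choose k) ^ 2 * ((k + a + k).choose k) ^ 2 := by
  have hsum : ∑ m ∈ range (a + 1),
        a.choose m * k.choose (a - m) * ((k + a) + ((k + a) - m)).choose ((k + a) - m)
      = ∑ t ∈ range (a + 1), a.choose t * k.choose t * (a + 2 * k + t).choose (a + k) := by
    rw [← sum_range_reflect]
    refine sum_congr rfl fun t ht => ?_
    have ht : t ≤ a := by simpa [Nat.lt_succ_iff] using ht
    rw [add_tsub_cancel_right, choose_symm_of_eq_add (by omega : a = t + (a - t)),
      show a - (a - t) = t by omega, show k + a - (a - t) = k + t by omega,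
      choose_symm_of_eq_add (by omega : k + a + (k + t) = k + t + (a + k))]
    congr 2; omega
  have hmul :
      (a + 2 * k).choose a * (2 * k).choose k = (a + 2 * k).choose k * (k + a).choose k := by
    rw [choose_symm_of_eq_add rfl, choose_mul (by omega : k ≤ 2 * k),
      show a + 2 * k - k = k + a by omega, show 2 * k - k = k by omega]
  rw [centralBinom_eq_two_mul_choose, hsum, sum_choose_mul_choose_mul_add_choose,
    ← choose_symm_add (a := k) (b := a), show k + a + k = a + 2 * k by omega]
  linear_combination (k + a).choose k * (a + 2 * k).choose k * hmul

end Nat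

section Words

variable {α : Type*} [Fintype α]

lemma card_filter_eq_zero_add_one_add_two (w : α → Fin 3) :
    #{i | w i = 0} + #{i | w i = 1} + #{i | w i = 2} = Fintype.card α := by
  rw [← card_univ, card_eq_sum_card_fiberwise (f := w) (s := univ) (t := univ)
    fun _ _ => mem_coe.2 (mem_univ _), Fin.sum_univ_three]

lemma forall_card_filter_eq_iff {w w' : α → Fin 3} :
    (∀ c, #{i | w i = c} = #{i | w' i = c}) ↔
      #{i | w i = 0} = #{i | w' i = 0} ∧ #{i | w i = 1} = #{i | w' i = 1} := by
  refine ⟨fun h => ⟨h 0, h 1⟩, fun ⟨h0, h1⟩ c => ?_⟩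
  have := card_filter_eq_zero_add_one_add_two w
  have := card_filter_eq_zero_add_one_add_two w'
  match c with
  | 0 => exact h0
  | 1 => exact h1
  | 2 => omega

lemma forall_card_filter_eq_and_card_filter_ne_zero_iff {k a : ℕ}
    (hα : Fintype.card α = k + a) {w w' : α → Fin 3} :
    ((∀ c, #{i | w i = c} = #{i | w' i = c}) ∧ #{i | w i ≠ 0} = k) ↔
      #{i | w i = 0} = a ∧ #{i | w' i = 0} = a ∧ #{i | w i = 1} = #{i | w' i = 1} := by
  have := card_filter_add_card_filter_not (s := univ) (fun i => w i = 0)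
  rw [card_univ, hα] at this
  simp only [forall_card_filter_eq_iff, ne_eq]
  omega

variable [DecidableEq α]

lemma card_words_filter_zero_eq_card_filter_one_eq (A : Finset α) (c : ℕ) :
    #{w : α → Fin 3 | ({i | w i = 0} : Finset α) = A ∧ #{i | w i = 1} = c}
      = (#Aᶜ).choose c := by
  rw [← card_powersetCard c Aᶜ]
  refine card_nbij' (fun w => ({i | w i = 1} : Finset α))
    (fun C i => if i ∈ A then 0 else if i ∈ C then 1 else 2) ?_ ?_ ?_ ?_
  · intro w hw
    simp only [mem_coe, mem_filter, mem_univ, true_and, Finset.ext_iff] at hw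
    simp only [mem_coe, mem_powersetCard, subset_iff, mem_filter, mem_univ, true_and, mem_compl]
    grind
  · intro C hC
    simp only [mem_coe, mem_powersetCard, subset_iff, mem_compl] at hC
    have hones :
        ({i | (if i ∈ A then 0 else if i ∈ C then 1 else 2 : Fin 3) = 1} : Finset α) = C := by
      ext i; simp only [mem_filter, mem_univ, true_and]; grind
    simp only [mem_coe, mem_filter, mem_univ, true_and, hones]
    refine ⟨?_, hC.2⟩
    ext i; simp only [mem_filter, mem_univ, true_and]; grind
  · intro w hw
    simp only [mem_coe, mem_filter, mem_univ, true_and, Finset.ext_iff] at hw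
    funext i
    simp only [mem_filter, mem_univ, true_and]
    grind
  · intro C hC
    simp only [mem_coe, mem_powersetCard, subset_iff, mem_compl] at hC
    ext i; simp only [mem_filter, mem_univ, true_and]; grind

lemma card_powersetCard_filter_card_inter_eq (A : Finset α) {r m : ℕ} (hm : m ≤ r) :
    #{B ∈ powersetCard r univ | #(A ∩ B) = m} = (#A).choose m * (#Aᶜ).choose (r - m) := by
  rw [← card_powersetCard m A, ← card_powersetCard (r - m) Aᶜ, ← card_product]
  refine card_nbij' (fun B => (A ∩ B, B \ A)) (fun q => q.1 ∪ q.2) ?_ ?_ ?_ ?_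
  · intro B hB
    simp only [mem_coe, mem_filter, mem_powersetCard, subset_univ, true_and] at hB
    simp only [mem_coe, mem_product, mem_powersetCard, inter_subset_left, hB.2, true_and]
    refine ⟨fun i hi => by simp_all, ?_⟩
    have := card_sdiff_add_card_inter B A
    rw [inter_comm] at this
    omega
  · rintro ⟨X, Y⟩ hXY
    simp only [mem_coe, mem_product, mem_powersetCard] at hXY
    have hAY : Disjoint A Y := (subset_compl_iff_disjoint_right.1 hXY.2.1).symm
    have hdisj : Disjoint X Y := disjoint_of_subset_left hXY.1.1 hAY
    simp only [mem_coe, mem_filter, mem_powersetCard, subset_univ, true_and,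
      card_union_of_disjoint hdisj, inter_union_distrib_left, inter_eq_right.2 hXY.1.1,
      disjoint_iff_inter_eq_empty.1 hAY, union_empty]
    omega
  · intro B _
    simp only
    rw [inter_comm, union_comm, sdiff_union_inter]
  · rintro ⟨X, Y⟩ hXY
    simp only [mem_coe, mem_product, mem_powersetCard, subset_iff, mem_compl] at hXY
    ext i <;> simp only [mem_union, mem_inter, mem_sdiff] <;> grind

lemma sum_powersetCard_card_inter (A : Finset α) (r : ℕ) (f : ℕ → ℕ) :
    ∑ B ∈ powersetCard r univ, f #(A ∩ B)
      = ∑ m ∈ range (r + 1), (#A).choose m * (#Aᶜ).choose (r - m) * f m := by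
  have hmaps : ∀ B ∈ powersetCard r univ, #(A ∩ B) ∈ range (r + 1) := fun B hB =>
    mem_range_succ_iff.2 ((card_le_card inter_subset_right).trans (mem_powersetCard.1 hB).2.le)
  rw [← sum_fiberwise_of_maps_to hmaps]
  refine sum_congr rfl fun m hm => ?_
  rw [sum_congr rfl fun B hB => congrArg f (mem_filter.1 hB).2, sum_const, smul_eq_mul,
    card_powersetCard_filter_card_inter_eq A (mem_range_succ_iff.1 hm)]

lemma card_pairs_filter_zero_eq_card_filter_one_eq {k : ℕ} (A B : Finset α)
    (hA : #Aᶜ = k) (hB : #Bᶜ = k) :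
    #{p : (α → Fin 3) × (α → Fin 3) | (({i | p.1 i = 0} : Finset α) = A ∧
        ({i | p.2 i = 0} : Finset α) = B) ∧ #{i | p.1 i = 1} = #{i | p.2 i = 1}}
      = k.centralBinom := by
  rw [card_eq_sum_card_fiberwise (f := fun p => #{i | p.1 i = 1}) (t := range (k + 1))
      fun p hp => ?bound, Nat.centralBinom_eq_two_mul_choose, ← Nat.sum_range_choose_sq]
  case bound =>
    obtain ⟨⟨rfl, -⟩, -⟩ := (mem_filter.1 hp).2
    rw [coe_range, Set.mem_Iio, Nat.lt_succ_iff, ← hA]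
    exact card_le_card fun i hi => by simp_all
  refine sum_congr rfl fun c _ => ?_
  let words (D : Finset α) : Finset (α → Fin 3) :=
    {w | ({i | w i = 0} : Finset α) = D ∧ #{i | w i = 1} = c}
  calc _ = #(words A ×ˢ words B) := by
        congr 1
        ext p
        simp only [words, mem_filter, mem_univ, true_and, mem_product]
        grind
    _ = k.choose c ^ 2 := by
        rw [card_product, card_words_filter_zero_eq_card_filter_one_eq,
          card_words_filter_zero_eq_card_filter_one_eq, hA, hB, sq]

lemma sum_abelianSquares_filter_card_ne_zero_eq (f : ℕ → ℕ) {k a : ℕ}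
    (hα : Fintype.card α = k + a) :
    ∑ p ∈ ({p : (α → Fin 3) × (α → Fin 3) |
        (∀ c, #{i | p.1 i = c} = #{i | p.2 i = c}) ∧ #{i | p.1 i ≠ 0} = k} : Finset _),
        f #{i | p.1 i = 0 ∧ p.2 i = 0}
      = k.centralBinom *
          ((k + a).choose a * ∑ m ∈ range (a + 1), a.choose m * k.choose (a - m) * f m) := by
  have hcompl : ∀ A : Finset α, #A = a → #Aᶜ = k := fun A hA => by
    rw [card_compl, hα, hA]; omega
  rw [filter_congr fun p _ => forall_card_filter_eq_and_card_filter_ne_zero_iff hα]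
  set S : Finset ((α → Fin 3) × (α → Fin 3)) := {p | #{i | p.1 i = 0} = a ∧
    #{i | p.2 i = 0} = a ∧ #{i | p.1 i = 1} = #{i | p.2 i = 1}}
  have hmaps : ∀ p ∈ S, (({i | p.1 i = 0} : Finset α), ({i | p.2 i = 0} : Finset α))
      ∈ powersetCard a univ ×ˢ powersetCard a univ := by
    intro p hp
    simp only [S, mem_filter, mem_univ, true_and] at hp
    simp [mem_powersetCard, hp.1, hp.2.1]
  rw [← sum_fiberwise_of_maps_to hmaps]
  have hfiber : ∀ q ∈ powersetCard a (univ : Finset α) ×ˢ powersetCard a univ,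
      ∑ p ∈ S with (({i | p.1 i = 0} : Finset α), ({i | p.2 i = 0} : Finset α)) = q,
        f #{i | p.1 i = 0 ∧ p.2 i = 0} = k.centralBinom * f #(q.1 ∩ q.2) := by
    rintro ⟨A, B⟩ hq
    simp only [mem_product, mem_powersetCard, subset_univ, true_and] at hq
    rw [← card_pairs_filter_zero_eq_card_filter_one_eq A B (hcompl A hq.1) (hcompl B hq.2),
      ← smul_eq_mul, ← sum_const]
    refine sum_congr ?_ fun p hp => ?_
    · ext p
      simp only [S, mem_filter, mem_univ, true_and, Prod.ext_iff]
      grind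
    · obtain ⟨⟨hpA, hpB⟩, -⟩ := (mem_filter.1 hp).2
      rw [filter_and, hpA, hpB]
  rw [sum_congr rfl hfiber, ← mul_sum, sum_product]
  congr 1
  rw [sum_congr rfl fun A hA => by
      rw [sum_powersetCard_card_inter, (mem_powersetCard.1 hA).2,
        hcompl A (mem_powersetCard.1 hA).2],
    sum_const, card_powersetCard, card_univ, hα, smul_eq_mul]

end Words

theorem weighted_abelian_squares_apery (n k : ℕ) (hk : k ≤ n) :
    ∑ p ∈ (Finset.univ : Finset ((Fin n → Fin 3) × (Fin n → Fin 3))).filter (fun p =>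
        (∀ c : Fin 3,
          (Finset.univ.filter (fun i => p.1 i = c)).card
            = (Finset.univ.filter (fun i => p.2 i = c)).card) ∧
        (Finset.univ.filter (fun i => p.1 i ≠ 0)).card = k),
        (n + (n - (Finset.univ.filter (fun i => p.1 i = 0 ∧ p.2 i = 0)).card)).choose
          (n - (Finset.univ.filter (fun i => p.1 i = 0 ∧ p.2 i = 0)).card)
      = (n.choose k) ^ 2 * ((n + k).choose k) ^ 2 := by
  obtain ⟨a, rfl⟩ : ∃ a, n = k + a := ⟨n - k, by omega⟩
  exact (sum_abelianSquares_filter_card_ne_zero_eq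
    (fun m => ((k + a) + ((k + a) - m)).choose ((k + a) - m)) (Fintype.card_fin _)).trans
    (Nat.centralBinom_mul_choose_mul_sum_eq a k)
end
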